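/- For a primitive n-th root of unity ζ_n and 1 ≤ m ≤ ⌊n/2⌋-1, 𝔷_n^⋆(ζ_n; m, 2) = -∑_{j=0}^{m-1} (1/n²)(2·C(n, 2m-2j+2) + (-1)^{m-j}·C(n, m-j+1))·𝔷_n^⋆(ζ_n; j, 2), with 𝔷_n^⋆(ζ_n; 0, 2) = 1. -/

import Mathlib

open Finset

lemma sum_monotone_eq (t : ℕ → ℂ) (n m : ℕ) (hn : 0 < n) :
    ∑ f ∈ Finset.univ.filter
      (fun f : Fin m → Fin n => (∀ j, 1 ≤ (f j : ℕ)) ∧ ∀ j k, j ≤ k → f j ≤ f k),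
      ∏ j, t (f j : ℕ)
    = ∑ l ∈ Finset.finsuppAntidiag (Finset.Ico 1 n) m,
        ∏ i ∈ Finset.Ico 1 n, t i ^ l i := by
  classical
  set M : (Fin m → Fin n) → Multiset ℕ :=
    fun f => Multiset.map (fun j => (f j : ℕ)) Finset.univ.val with hM
  have hMofFn : ∀ f : Fin m → Fin n, M f = ↑(List.ofFn (fun j => (f j : ℕ))) := by
    intro f; rw [hM]; exact Fin.univ_val_map _
  -- forward map
  set F : (Fin m → Fin n) → (ℕ →₀ ℕ) := fun f => (M f).toFinsupp with hF
  -- backward map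
  set L : (ℕ →₀ ℕ) → List ℕ :=
    fun l => Multiset.sort (Finsupp.toMultiset l) (· ≤ ·) with hL
  set G : (ℕ →₀ ℕ) → (Fin m → Fin n) := fun l j =>
    if h : (L l).getD (j : ℕ) 0 < n then ⟨(L l).getD (j : ℕ) 0, h⟩ else ⟨0, hn⟩ with hG
  have hlen : ∀ l ∈ Finset.finsuppAntidiag (Finset.Ico 1 n) m, (L l).length = m := by
    intro l hl
    rw [Finset.mem_finsuppAntidiag] at hl
    rw [hL]
    rw [Multiset.length_sort, Finsupp.card_toMultiset]
    rw [← hl.1]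
    exact Finsupp.sum_of_support_subset l hl.2 _ (fun i _ => rfl)
  have hmemL : ∀ l ∈ Finset.finsuppAntidiag (Finset.Ico 1 n) m,
      ∀ x ∈ L l, x ∈ Finset.Ico 1 n := by
    intro l hl x hx
    rw [Finset.mem_finsuppAntidiag] at hl
    rw [hL, Multiset.mem_sort] at hx
    exact hl.2 ((Finsupp.mem_toMultiset l x).mp hx)
  have hGval : ∀ l ∈ Finset.finsuppAntidiag (Finset.Ico 1 n) m, ∀ j : Fin m,
      (G l j : ℕ) = (L l).getD (j : ℕ) 0 ∧ (G l j : ℕ) ∈ Finset.Ico 1 n := by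
    intro l hl j
    have hjl : (j : ℕ) < (L l).length := by rw [hlen l hl]; exact j.2
    have hmem : (L l).getD (j : ℕ) 0 ∈ Finset.Ico 1 n := by
      rw [List.getD_eq_getElem _ _ hjl]
      exact hmemL l hl _ (List.getElem_mem hjl)
    have hlt : (L l).getD (j : ℕ) 0 < n := (Finset.mem_Ico.mp hmem).2
    have : G l j = ⟨(L l).getD (j : ℕ) 0, hlt⟩ := by rw [hG]; exact dif_pos hlt
    rw [this]; exact ⟨rfl, hmem⟩
  -- apply the bijection
  refine Finset.sum_nbij' F G ?_ ?_ ?_ ?_ ?_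
  · -- F maps into finsuppAntidiag
    intro f hf
    rw [Finset.mem_filter] at hf
    rw [Finset.mem_finsuppAntidiag]
    constructor
    · have hsupp : (M f).toFinset ⊆ Finset.Ico 1 n := by
        intro x hx
        rw [Multiset.mem_toFinset, hM] at hx
        obtain ⟨j, _, rfl⟩ := Multiset.mem_map.mp hx
        exact Finset.mem_Ico.mpr ⟨hf.2.1 j, (f j).2⟩
      calc ∑ i ∈ Finset.Ico 1 n, F f i
          = ∑ i ∈ (M f).toFinset, F f i := by
            refine (Finset.sum_subset hsupp ?_).symm
            intro x _ hx
            rw [Multiset.mem_toFinset] at hx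
            simpa [hF, Multiset.toFinsupp_apply] using Multiset.count_eq_zero_of_notMem hx
        _ = Multiset.card (M f) := by
            simp only [hF, Multiset.toFinsupp_apply]
            exact Multiset.toFinset_sum_count_eq (M f)
        _ = m := by simp [hM]
    · intro x hx
      rw [hF, Finsupp.mem_support_iff, Multiset.toFinsupp_apply] at hx
      have : x ∈ M f := Multiset.count_ne_zero.mp hx
      rw [hM] at this
      obtain ⟨j, _, rfl⟩ := Multiset.mem_map.mp this
      exact Finset.mem_Ico.mpr ⟨hf.2.1 j, (f j).2⟩
  · -- G maps into the filter
    intro l hl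
    rw [Finset.mem_filter]
    refine ⟨Finset.mem_univ _, fun j => (Finset.mem_Ico.mp (hGval l hl j).2).1, ?_⟩
    intro j k hjk
    have hj := (hGval l hl j).1
    have hk := (hGval l hl k).1
    have hjl : (j : ℕ) < (L l).length := by rw [hlen l hl]; exact j.2
    have hkl : (k : ℕ) < (L l).length := by rw [hlen l hl]; exact k.2
    rw [Fin.le_def, hj, hk, List.getD_eq_getElem _ _ hjl, List.getD_eq_getElem _ _ hkl]
    have hsorted : (L l).Pairwise (· ≤ ·) := Multiset.pairwise_sort _ _
    rcases eq_or_lt_of_le (show (j:ℕ) ≤ (k:ℕ) from hjk) with h' | h'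
    · simp only [h']; exact le_refl _
    · exact List.pairwise_iff_getElem.mp hsorted _ _ hjl hkl h'
  · -- left inverse : G (F f) = f
    intro f hf
    rw [Finset.mem_filter] at hf
    have hmono : Monotone (fun j => (f j : ℕ)) := by
      intro j k hjk; exact hf.2.2 j k hjk
    have hsorted : (List.ofFn (fun j => (f j : ℕ))).Pairwise (· ≤ ·) :=
        List.sortedLE_iff_pairwise.mp hmono.sortedLE_ofFn
    have hLF : L (F f) = List.ofFn (fun j => (f j : ℕ)) := by
      show Multiset.sort (Finsupp.toMultiset (Multiset.toFinsupp (M f))) (· ≤ ·) = _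
      rw [Multiset.toFinsupp_toMultiset, hMofFn]
      refine List.Perm.eq_of_pairwise' (Multiset.pairwise_sort _ _) hsorted ?_
      rw [← Multiset.coe_eq_coe, Multiset.sort_eq]
    funext j
    have hjl : (j : ℕ) < (List.ofFn (fun j => (f j : ℕ))).length := by
      rw [List.length_ofFn]; exact j.2
    have hval : (L (F f)).getD (j : ℕ) 0 = (f j : ℕ) := by
      rw [hLF, List.getD_eq_getElem _ _ hjl, List.getElem_ofFn]
    rw [hG]
    simp only [hval]
    rw [dif_pos (f j).2]
  · -- right inverse : F (G l) = l
    intro l hl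
    have key : M (G l) = Finsupp.toMultiset l := by
      rw [hMofFn]
      have h1 : List.ofFn (fun j : Fin m => (G l j : ℕ)) = L l := by
        refine List.ext_getElem (by rw [List.length_ofFn, hlen l hl]) ?_
        intro i h1 h2
        rw [List.getElem_ofFn]
        have := (hGval l hl ⟨i, by simpa using h1⟩).1
        rw [this, List.getD_eq_getElem _ _ h2]
      rw [h1, hL, Multiset.sort_eq]
    show Multiset.toFinsupp (M (G l)) = l
    rw [key, Finsupp.toMultiset_toFinsupp]
  · -- products agree
    intro f hf
    rw [Finset.mem_filter] at hf
    have hsupp : (M f).toFinset ⊆ Finset.Ico 1 n := by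
      intro x hx
      rw [Multiset.mem_toFinset, hM] at hx
      obtain ⟨j, _, rfl⟩ := Multiset.mem_map.mp hx
      exact Finset.mem_Ico.mpr ⟨hf.2.1 j, (f j).2⟩
    calc ∏ j, t (f j : ℕ)
        = ((M f).map t).prod := by
          rw [hM, Multiset.map_map]
          rfl
      _ = ∏ i ∈ (M f).toFinset, t i ^ (M f).count i :=
          Finset.prod_multiset_map_count _ _
      _ = ∏ i ∈ Finset.Ico 1 n, t i ^ (M f).count i := by
          refine Finset.prod_subset hsupp ?_
          intro x _ hx
          rw [Multiset.mem_toFinset] at hx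
          rw [Multiset.count_eq_zero_of_notMem hx, pow_zero]
      _ = ∏ i ∈ Finset.Ico 1 n, t i ^ (F f) i := by
          refine Finset.prod_congr rfl fun i _ => ?_
          rw [hF, Multiset.toFinsupp_apply]

-- geometric series inverse
lemma geom_mul_eq_one (c : ℂ) :
    (1 - PowerSeries.C c * PowerSeries.X) * PowerSeries.mk (fun k => c ^ k) = 1 := by
  ext k
  rw [sub_mul, one_mul, mul_assoc, map_sub]
  cases k with
  | zero => simp
  | succ k =>
      rw [PowerSeries.coeff_mk, PowerSeries.coeff_C_mul, PowerSeries.coeff_succ_X_mul,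
        PowerSeries.coeff_mk, PowerSeries.coeff_one]
      simp [pow_succ, mul_comm]

lemma prod_geom_mul_eq_one (t : ℕ → ℂ) (s : Finset ℕ) :
    (∏ i ∈ s, (1 - PowerSeries.C (t i) * PowerSeries.X))
      * (∏ i ∈ s, PowerSeries.mk (fun k => t i ^ k)) = 1 := by
  rw [← Finset.prod_mul_distrib]
  rw [Finset.prod_congr rfl (fun i _ => geom_mul_eq_one (t i))]
  exact Finset.prod_const_one

-- Newton-type recurrence
lemma newton (t : ℕ → ℂ) (s : Finset ℕ) (m : ℕ) (hm : 1 ≤ m) :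
    ∑ p ∈ Finset.HasAntidiagonal.antidiagonal m,
      (PowerSeries.coeff p.1 (∏ i ∈ s, (1 - PowerSeries.C (t i) * PowerSeries.X)))
        * (PowerSeries.coeff p.2 (∏ i ∈ s, PowerSeries.mk (fun k => t i ^ k))) = 0 := by
  have h := congrArg (PowerSeries.coeff m) (prod_geom_mul_eq_one t s)
  rw [PowerSeries.coeff_mul, PowerSeries.coeff_one, if_neg (by omega)] at h
  exact h

-- coefficient of the "H" series
lemma coeff_prod_mk (t : ℕ → ℂ) (n m : ℕ) :
    PowerSeries.coeff m (∏ i ∈ Finset.Ico 1 n, PowerSeries.mk (fun k => t i ^ k))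
      = ∑ l ∈ Finset.finsuppAntidiag (Finset.Ico 1 n) m,
          ∏ i ∈ Finset.Ico 1 n, t i ^ l i := by
  rw [PowerSeries.coeff_prod]
  exact Finset.sum_congr rfl fun l _ => Finset.prod_congr rfl fun i _ => by
    rw [PowerSeries.coeff_mk]

-- coeff of (1-X)^n
lemma coeff_one_sub_X_pow (n k : ℕ) :
    ((1 - Polynomial.X : Polynomial ℂ) ^ n).coeff k = (-1 : ℂ) ^ k * n.choose k := by
  have h : (1 - Polynomial.X : Polynomial ℂ) ^ n
      = (-1 : Polynomial ℂ) ^ n * (Polynomial.X + Polynomial.C (-1 : ℂ)) ^ n := by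
    rw [← mul_pow, Polynomial.C_neg, Polynomial.C_1]
    ring_nf
  rw [h]
  rcases le_or_gt k n with hk | hk
  · rw [show ((-1 : Polynomial ℂ) ^ n) = Polynomial.C ((-1 : ℂ) ^ n) by simp,
      Polynomial.coeff_C_mul, Polynomial.coeff_X_add_C_pow]
    rw [← mul_assoc, ← pow_add]
    congr 1
    rw [show n + (n - k) = 2 * (n - k) + k by omega, pow_add, pow_mul]
    simp
  · rw [show ((-1 : Polynomial ℂ) ^ n) = Polynomial.C ((-1 : ℂ) ^ n) by simp,
      Polynomial.coeff_C_mul, Polynomial.coeff_X_add_C_pow, Nat.choose_eq_zero_of_lt hk]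
    simp

-- even coefficients of comp with X^2
lemma coeff_comp_X_sq (p : Polynomial ℂ) (k : ℕ) :
    (p.comp (Polynomial.X ^ 2)).coeff (2 * k) = p.coeff k := by
  rw [Polynomial.comp_eq_sum_left, Polynomial.coeff_sum]
  rw [Polynomial.sum_def]
  have : ∀ e ∈ p.support,
      (Polynomial.C (p.coeff e) * (Polynomial.X ^ 2) ^ e).coeff (2 * k)
        = if e = k then p.coeff e else 0 := by
    intro e _
    rw [← pow_mul, Polynomial.coeff_C_mul, Polynomial.coeff_X_pow]
    by_cases h : e = k
    · simp [h]
    · rw [if_neg (by omega), if_neg h, mul_zero]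
  rw [Finset.sum_congr rfl this, Finset.sum_ite_eq' p.support k (fun e => p.coeff e)]
  by_cases h : k ∈ p.support
  · rw [if_pos h]
  · rw [if_neg h]; exact (Polynomial.notMem_support_iff.mp h).symm

section main
variable {n : ℕ} {ζ : ℂ}

-- the geometric polynomial identity
lemma prod_X_sub_zeta (hn : 2 ≤ n) (hζ : IsPrimitiveRoot ζ n) :
    ∏ i ∈ Finset.Ico 1 n, (Polynomial.X - Polynomial.C (ζ ^ i))
      = ∑ i ∈ Finset.range n, Polynomial.X ^ i := by
  have key : (Polynomial.X ^ n - Polynomial.C (1:ℂ))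
      = ∏ i ∈ Finset.range n, (Polynomial.X - Polynomial.C (ζ ^ i)) := by
    simpa using X_pow_sub_C_eq_prod hζ (by omega) (one_pow n)
  have hsplit : ∏ i ∈ Finset.range n, (Polynomial.X - Polynomial.C (ζ ^ i))
      = (Polynomial.X - 1) * ∏ i ∈ Finset.Ico 1 n, (Polynomial.X - Polynomial.C (ζ ^ i)) := by
    rw [Finset.range_eq_Ico, Finset.prod_eq_prod_Ico_succ_bot (by omega : 0 < n)]
    norm_num
  have hgeom := geom_sum_mul (Polynomial.X : Polynomial ℂ) n
  have hX1 : (Polynomial.X - 1 : Polynomial ℂ) ≠ 0 := by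
    simpa using Polynomial.X_sub_C_ne_zero (1:ℂ)
  apply mul_left_cancel₀ hX1
  rw [← hsplit, ← key, mul_comm, hgeom]
  simp

lemma eval_prod_sub (hn : 2 ≤ n) (hζ : IsPrimitiveRoot ζ n) (c : ℂ) :
    ∏ i ∈ Finset.Ico 1 n, (c - ζ ^ i) = ∑ i ∈ Finset.range n, c ^ i := by
  have := congrArg (Polynomial.eval c) (prod_X_sub_zeta hn hζ)
  simpa [Polynomial.eval_prod] using this

lemma prod_one_sub_zeta (hn : 2 ≤ n) (hζ : IsPrimitiveRoot ζ n) :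
    ∏ i ∈ Finset.Ico 1 n, ((1:ℂ) - ζ ^ i) = n := by
  simpa using eval_prod_sub hn hζ 1

lemma one_sub_zeta_ne (hζ : IsPrimitiveRoot ζ n) {i : ℕ} (hi : i ∈ Finset.Ico 1 n) :
    (1:ℂ) - ζ ^ i ≠ 0 := by
  rw [Finset.mem_Ico] at hi
  have := hζ.pow_ne_one_of_pos_of_lt (by omega) hi.2
  intro h
  exact this (by linear_combination -h)

lemma eval_identity (hn : 2 ≤ n) (hζ : IsPrimitiveRoot ζ n) (x : ℂ) :
    (n:ℂ)^2 * x^2 * ∏ i ∈ Finset.Ico 1 n, (1 - (((1:ℂ) - ζ ^ i)^2)⁻¹ * x^2)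
      = (1+x)^n + (1-x)^n - 1 - (1-x^2)^n := by
  have hn0 : (n:ℂ) ≠ 0 := by
    exact Nat.cast_ne_zero.mpr (by omega : n ≠ 0)
  set G1 : ℂ := ∑ i ∈ Finset.range n, (1-x)^i with hG1d
  set G2 : ℂ := ∑ i ∈ Finset.range n, (1+x)^i with hG2d
  have h2 : ∏ i ∈ Finset.Ico 1 n, (1 - (((1:ℂ) - ζ ^ i)^2)⁻¹ * x^2)
      = G1 * G2 * (((n:ℂ))^2)⁻¹ := by
    have step : ∀ i ∈ Finset.Ico 1 n,
        (1 - (((1:ℂ) - ζ ^ i)^2)⁻¹ * x^2)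
          = ((1-x) - ζ ^ i) * ((1+x) - ζ ^ i) * (((1:ℂ) - ζ ^ i)^2)⁻¹ := by
      intro i hi
      have h := one_sub_zeta_ne hζ hi
      field_simp
      ring
    rw [Finset.prod_congr rfl step, Finset.prod_mul_distrib, Finset.prod_mul_distrib,
      Finset.prod_inv_distrib, Finset.prod_pow, prod_one_sub_zeta hn hζ,
      eval_prod_sub hn hζ (1-x), eval_prod_sub hn hζ (1+x)]
  have g1 : G1 * (-x) = (1-x)^n - 1 := by
    have := geom_sum_mul (1-x) n
    rw [hG1d]
    linear_combination this
  have g2 : G2 * x = (1+x)^n - 1 := by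
    have := geom_sum_mul (1+x) n
    rw [hG2d]
    linear_combination this
  have key : (G2 * x) * (G1 * (-x)) = ((1+x)^n - 1) * ((1-x)^n - 1) := by
    rw [g1, g2]
  have hinv : (n:ℂ)^2 * (((n:ℂ))^2)⁻¹ = 1 := by
    field_simp
  have hmul : ((1:ℂ)-x^2)^n = (1-x)^n * (1+x)^n := by
    rw [← mul_pow]; congr 1; ring
  rw [h2]
  linear_combination (x^2 * G1 * G2) * hinv - key + hmul

lemma poly_identity (hn : 2 ≤ n) (hζ : IsPrimitiveRoot ζ n) :
    Polynomial.C ((n:ℂ)^2) * (Polynomial.X^2 *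
        ∏ i ∈ Finset.Ico 1 n, (1 - Polynomial.C ((((1:ℂ) - ζ ^ i)^2)⁻¹) * Polynomial.X^2))
      = (1+Polynomial.X)^n + (1-Polynomial.X)^n - 1 - (1-Polynomial.X^2)^n := by
  apply Polynomial.funext
  intro x
  have h := eval_identity hn hζ x
  simp only [Polynomial.eval_mul, Polynomial.eval_add, Polynomial.eval_sub, Polynomial.eval_pow,
    Polynomial.eval_one, Polynomial.eval_C, Polynomial.eval_X, Polynomial.eval_prod]
  rw [← mul_assoc]
  exact h

lemma coeff_A (hn : 2 ≤ n) (hζ : IsPrimitiveRoot ζ n) (k : ℕ) :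
    (∏ i ∈ Finset.Ico 1 n,
        (1 - Polynomial.C ((((1:ℂ) - ζ ^ i)^2)⁻¹) * Polynomial.X)).coeff k
      = (1/(n:ℂ)^2) * (2 * (n.choose (2*k+2)) + (-1:ℂ)^k * (n.choose (k+1))) := by
  have hn2 : ((n:ℂ))^2 ≠ 0 := by
    have : (n:ℂ) ≠ 0 := Nat.cast_ne_zero.mpr (by omega)
    exact pow_ne_zero 2 this
  set A := ∏ i ∈ Finset.Ico 1 n,
      (1 - Polynomial.C ((((1:ℂ) - ζ ^ i)^2)⁻¹) * Polynomial.X) with hA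
  have hcomp : ∏ i ∈ Finset.Ico 1 n,
      (1 - Polynomial.C ((((1:ℂ) - ζ ^ i)^2)⁻¹) * Polynomial.X^2) = A.comp (Polynomial.X^2) := by
    rw [hA, Polynomial.prod_comp]
    exact Finset.prod_congr rfl fun i _ => by
      simp [Polynomial.sub_comp, Polynomial.mul_comp]
  have hco := congrArg (fun p => Polynomial.coeff p (2*k+2)) (poly_identity hn hζ)
  simp only [hcomp] at hco
  have hL : (Polynomial.C ((n:ℂ)^2) * (Polynomial.X^2 * A.comp (Polynomial.X^2))).coeff (2*k+2)
      = (n:ℂ)^2 * A.coeff k := by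
    rw [Polynomial.coeff_C_mul, Polynomial.coeff_X_pow_mul, coeff_comp_X_sq]
  have hsq : ((1:Polynomial ℂ) - Polynomial.X^2)^n
      = ((1 - Polynomial.X : Polynomial ℂ)^n).comp (Polynomial.X^2) := by
    rw [Polynomial.pow_comp, Polynomial.sub_comp, Polynomial.one_comp, Polynomial.X_comp]
  have hR : ((1+Polynomial.X)^n + (1-Polynomial.X)^n - 1
        - ((1:Polynomial ℂ)-Polynomial.X^2)^n).coeff (2*k+2)
      = (n.choose (2*k+2) : ℂ) + (n.choose (2*k+2) : ℂ)
        - ((-1:ℂ)^(k+1) * (n.choose (k+1))) := by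
    rw [Polynomial.coeff_sub, Polynomial.coeff_sub, Polynomial.coeff_add,
      Polynomial.coeff_one_add_X_pow, coeff_one_sub_X_pow, hsq,
      show 2*k+2 = 2*(k+1) by ring, coeff_comp_X_sq, coeff_one_sub_X_pow,
      Polynomial.coeff_one, if_neg (by omega)]
    have : (-1:ℂ)^(2*(k+1)) = 1 := by
      rw [pow_mul]; norm_num
    rw [show 2*(k+1) = 2*k+2 by ring] at this ⊢
    rw [this, one_mul, sub_zero]
  rw [hL, hR] at hco
  have hpow : (-1:ℂ)^(k+1) = -((-1:ℂ)^k) := by rw [pow_succ]; ring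
  rw [div_mul_eq_mul_div, one_mul, eq_div_iff hn2]
  linear_combination hco - (n.choose (k+1) : ℂ) * hpow

end main

/-- The `q`-multiple zeta-star value `𝔷_n^⋆(ζ; m, s)`. -/
noncomputable def zetaStar (n : ℕ) (ζ : ℂ) (m s : ℕ) : ℂ :=
  ∑ f ∈ Finset.univ.filter
      (fun f : Fin m → Fin n => (∀ j, 1 ≤ (f j : ℕ)) ∧ ∀ j k, j ≤ k → f j ≤ f k),
    ∏ j, ((1 - ζ ^ (f j : ℕ)) ^ s)⁻¹

theorem stmt13 (n : ℕ) (hn : 2 ≤ n) (ζ : ℂ) (hζ : IsPrimitiveRoot ζ n)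
    (m : ℕ) (hm : 1 ≤ m) (hmn : m ≤ n / 2 - 1) :
    zetaStar n ζ m 2
      = -∑ j ∈ Finset.range m,
          (1 / (n : ℂ) ^ 2) * (2 * (n.choose (2 * m - 2 * j + 2))
              + (-1 : ℂ) ^ (m - j) * (n.choose (m - j + 1)))
            * zetaStar n ζ j 2 := by
  classical
  set t : ℕ → ℂ := fun i => (((1:ℂ) - ζ ^ i)^2)⁻¹ with ht
  -- zetaStar as coefficients of the generating power series
  have hH : ∀ j : ℕ, zetaStar n ζ j 2
      = PowerSeries.coeff j (∏ i ∈ Finset.Ico 1 n, PowerSeries.mk fun k => t i ^ k) := by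
    intro j
    rw [coeff_prod_mk, zetaStar, ← sum_monotone_eq t n j (by omega)]
  set A : Polynomial ℂ := ∏ i ∈ Finset.Ico 1 n, (1 - Polynomial.C (t i) * Polynomial.X) with hA
  have hAco : ∀ a : ℕ, A.coeff a
      = (1/(n:ℂ)^2) * (2 * (n.choose (2*a+2)) + (-1:ℂ)^a * (n.choose (a+1))) := by
    intro a
    rw [hA]; simp only [ht]
    exact coeff_A hn hζ a
  have hE0 : A.coeff 0 = 1 := by
    rw [hA, Polynomial.coeff_zero_eq_eval_zero, Polynomial.eval_prod]
    rw [Finset.prod_congr rfl (fun i _ => by simp : ∀ i ∈ Finset.Ico 1 n,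
      Polynomial.eval 0 (1 - Polynomial.C (t i) * Polynomial.X) = 1)]
    exact Finset.prod_const_one
  have hcoe : ∀ c : ℂ, ((1 - Polynomial.C c * Polynomial.X : Polynomial ℂ) : PowerSeries ℂ)
      = 1 - PowerSeries.C c * PowerSeries.X := by
    intro c
    rw [← Polynomial.coeToPowerSeries.ringHom_apply, map_sub, map_one, map_mul]
    rw [Polynomial.coeToPowerSeries.ringHom_apply, Polynomial.coeToPowerSeries.ringHom_apply,
      Polynomial.coe_C, Polynomial.coe_X]
  have hE : ∀ a : ℕ, PowerSeries.coeff a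
      (∏ i ∈ Finset.Ico 1 n, (1 - PowerSeries.C (t i) * PowerSeries.X)) = A.coeff a := by
    intro a
    have hprod : (∏ i ∈ Finset.Ico 1 n, (1 - PowerSeries.C (t i) * PowerSeries.X))
        = ((A : Polynomial ℂ) : PowerSeries ℂ) := by
      rw [hA, ← Polynomial.coeToPowerSeries.ringHom_apply,
        map_prod Polynomial.coeToPowerSeries.ringHom]
      refine (Finset.prod_congr rfl fun i _ => ?_).symm
      rw [Polynomial.coeToPowerSeries.ringHom_apply, hcoe]
    rw [hprod, Polynomial.coeff_coe]
  -- Newton-type recurrence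
  have hnewton := newton t (Finset.Ico 1 n) m hm
  rw [Finset.Nat.sum_antidiagonal_eq_sum_range_succ_mk, Finset.sum_range_succ'] at hnewton
  simp only [hE] at hnewton
  rw [Nat.sub_zero, hE0, one_mul] at hnewton
  have hmain : zetaStar n ζ m 2
      = -∑ i ∈ Finset.range m, A.coeff (i+1) * zetaStar n ζ (m - (i+1)) 2 := by
    rw [hH m]
    refine eq_neg_of_add_eq_zero_right ?_
    rw [← hnewton]
    congr 1
    refine Finset.sum_congr rfl fun i _ => ?_
    rw [hH (m - (i+1))]
  rw [hmain]
  have hreflect : ∑ i ∈ Finset.range m, A.coeff (i+1) * zetaStar n ζ (m - (i+1)) 2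
      = ∑ j ∈ Finset.range m, A.coeff (m-j) * zetaStar n ζ j 2 := by
    rw [← Finset.sum_range_reflect (fun j => A.coeff (m-j) * zetaStar n ζ j 2) m]
    refine Finset.sum_congr rfl fun i hi => ?_
    rw [Finset.mem_range] at hi
    rw [show m - (m-1-i) = i + 1 by omega, show m-1-i = m - (i+1) by omega]
  rw [hreflect]
  congr 1
  refine Finset.sum_congr rfl fun j hj => ?_
  rw [Finset.mem_range] at hj
  rw [hAco (m-j), show 2*(m-j)+2 = 2*m-2*j+2 by omega, show (m-j)+1 = m-j+1 by omega]
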